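/- For nonnegative (almost surely positive, integrable with integrable logarithm) random variables Ψ₁,…,Ψ_L, the expectation E[log₂(1 + (∑ᵢ 1/√Ψᵢ)²)] is strictly greater than log₂((∑ᵢ 1/√(E[Ψᵢ]))²). -/

import Mathlib

open MeasureTheory Real

/-! Since `1/√Ψᵢ = exp(-(log Ψᵢ)/2)`, the quantity `log ∑ᵢ 1/√Ψᵢ` is log-sum-exp evaluated at
`(-(log Ψᵢ)/2)ᵢ`. Log-sum-exp is convex, so by Jensen its expectation is at least its value at
`(-E[log Ψᵢ]/2)ᵢ`, and Jensen for the concave `log` (`E[log Ψᵢ] ≤ log E[Ψᵢ]`) bounds that value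
below by `log ∑ᵢ 1/√E[Ψᵢ]`. Strictness comes from `log S² < log (1 + S²)`. As `log ∑ᵢ 1/√Ψᵢ` need
not be integrable, Jensen for log-sum-exp is applied through a tangent plane, which is affine in
the `log Ψᵢ` and hence integrable. -/

namespace Real

lemma one_div_sqrt_eq_exp {x : ℝ} (hx : 0 < x) : 1 / √x = exp (-log x / 2) := by
  rw [sqrt_eq_rpow, rpow_def_of_pos hx, one_div, ← exp_neg]
  ring_nf

lemma log_lt_half_log_one_add_sq {x : ℝ} (hx : 0 < x) : log x < log (1 + x ^ 2) / 2 := by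
  have : log (x ^ 2) < log (1 + x ^ 2) := log_lt_log (by positivity) (by linarith)
  rw [log_pow] at this
  push_cast at this
  linarith

/-- The tangent plane of the convex function log-sum-exp at `y` lies below its graph. -/
lemma log_sum_exp_add_sum_mul_sub_le {ι : Type*} (s : Finset ι) (x y : ι → ℝ) :
    log (∑ i ∈ s, exp (y i)) + ∑ i ∈ s, exp (y i) / (∑ j ∈ s, exp (y j)) * (x i - y i) ≤
      log (∑ i ∈ s, exp (x i)) := by
  rcases s.eq_empty_or_nonempty with rfl | hs
  · simp
  set Z := ∑ j ∈ s, exp (y j)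
  have hZ : 0 < Z := Finset.sum_pos (fun i _ => exp_pos _) hs
  have hw₀ : ∀ i ∈ s, 0 ≤ exp (y i) / Z := fun i _ => by positivity
  have hw₁ : ∑ i ∈ s, exp (y i) / Z = 1 := by rw [← Finset.sum_div, div_self hZ.ne']
  have hJensen := convexOn_exp.map_sum_le hw₀ hw₁ (p := fun i => x i - y i)
    (fun i _ => Set.mem_univ _)
  simp only [smul_eq_mul] at hJensen
  have hmean : ∑ i ∈ s, exp (y i) / Z * exp (x i - y i) = (∑ i ∈ s, exp (x i)) / Z := by
    rw [Finset.sum_div]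
    refine Finset.sum_congr rfl fun i _ => ?_
    rw [div_mul_eq_mul_div, ← exp_add, add_sub_cancel]
  rw [hmean, ← le_log_iff_exp_le (by positivity), log_div (by positivity) hZ.ne'] at hJensen
  linarith

end Real

namespace MeasureTheory

variable {Ω : Type*} [MeasurableSpace Ω] {μ : Measure Ω}

lemma integral_pos_of_ae_pos [NeZero μ] {f : Ω → ℝ} (hfi : Integrable f μ)
    (hf : ∀ᵐ ω ∂μ, 0 < f ω) : 0 < ∫ ω, f ω ∂μ := by
  rw [integral_pos_iff_support_of_nonneg_ae (hf.mono fun _ h => h.le) hfi, pos_iff_ne_zero]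
  intro h
  obtain ⟨ω, hpos, hzero⟩ := (hf.and (measure_eq_zero_iff_ae_notMem.1 h)).exists
  exact hzero hpos.ne'

lemma integral_lt_integral_of_ae_lt [NeZero μ] {f g : Ω → ℝ} (hfi : Integrable f μ)
    (hgi : Integrable g μ) (h : ∀ᵐ ω ∂μ, f ω < g ω) : ∫ ω, f ω ∂μ < ∫ ω, g ω ∂μ := by
  have := integral_pos_of_ae_pos (f := fun ω => g ω - f ω) (hgi.sub hfi)
    (h.mono fun _ h => sub_pos.2 h)
  rw [integral_sub hgi hfi] at this
  linarith

variable [IsProbabilityMeasure μ]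

lemma integral_log_le_log_integral {f : Ω → ℝ} (hf : ∀ᵐ ω ∂μ, 0 < f ω) (hfi : Integrable f μ)
    (hlog : Integrable (fun ω => log (f ω)) μ) : ∫ ω, log (f ω) ∂μ ≤ log (∫ ω, f ω ∂μ) := by
  set m := ∫ ω, f ω ∂μ
  have hm : 0 < m := integral_pos_of_ae_pos hfi hf
  have htangent : ∀ᵐ ω ∂μ, log (f ω) ≤ log m + (f ω / m - 1) := by
    filter_upwards [hf] with ω hω
    have := log_le_sub_one_of_pos (div_pos hω hm)
    rw [log_div hω.ne' hm.ne'] at this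
    linarith
  have hratio : Integrable (fun ω => f ω / m - 1) μ := (hfi.div_const m).sub (integrable_const 1)
  refine (integral_mono_ae (g := fun ω => log m + (f ω / m - 1)) hlog
    ((integrable_const _).add hratio) htangent).trans_eq ?_
  rw [integral_add (integrable_const _) hratio, integral_sub (hfi.div_const m) (integrable_const 1),
    integral_div, div_self hm.ne']
  simp

lemma log_sum_exp_integral_lt_integral {ι : Type*} [Fintype ι] {X : ι → Ω → ℝ} {G : Ω → ℝ}
    (hX : ∀ i, Integrable (X i) μ) (hG : Integrable G μ)
    (h : ∀ᵐ ω ∂μ, log (∑ i, exp (X i ω)) < G ω) :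
    log (∑ i, exp (∫ ω, X i ω ∂μ)) < ∫ ω, G ω ∂μ := by
  set y : ι → ℝ := fun i => ∫ ω, X i ω ∂μ
  set w : ι → ℝ := fun i => exp (y i) / ∑ j, exp (y j)
  have hterm : ∀ i, Integrable (fun ω => w i * (X i ω - y i)) μ :=
    fun i => ((hX i).sub (integrable_const _)).const_mul _
  have htangent_int : Integrable (fun ω => log (∑ i, exp (y i)) + ∑ i, w i * (X i ω - y i)) μ :=
    (integrable_const _).add (integrable_finsetSum _ fun i _ => hterm i)
  have htangent_mean :
      ∫ ω, (log (∑ i, exp (y i)) + ∑ i, w i * (X i ω - y i)) ∂μ = log (∑ i, exp (y i)) := by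
    rw [integral_add (integrable_const _) (integrable_finsetSum _ fun i _ => hterm i),
      integral_finsetSum _ fun i _ => hterm i]
    simp [integral_const_mul, integral_sub (hX _) (integrable_const _), y]
  rw [← htangent_mean]
  refine integral_lt_integral_of_ae_lt htangent_int hG (h.mono fun ω hω => ?_)
  exact (log_sum_exp_add_sum_mul_sub_le Finset.univ (fun i => X i ω) y).trans_lt hω

end MeasureTheory

/-- Lemma 1: for a.s. positive integrable random variables `Ψ i` with integrable
logarithm, `E[log₂(1 + (∑ᵢ 1/√Ψᵢ)²)] > log₂((∑ᵢ 1/√(E[Ψᵢ]))²)`. -/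
theorem stmt0 {Ω : Type*} [MeasureSpace Ω] (μ : Measure Ω) [IsProbabilityMeasure μ]
    (L : ℕ) (hL : 0 < L) (Ψ : Fin L → Ω → ℝ)
    (hpos : ∀ i, ∀ᵐ ω ∂μ, 0 < Ψ i ω)
    (hint : ∀ i, Integrable (Ψ i) μ)
    (hlog : ∀ i, Integrable (fun ω => Real.log (Ψ i ω)) μ)
    (hintLHS : Integrable
      (fun ω => Real.logb 2 (1 + (∑ i, 1 / Real.sqrt (Ψ i ω)) ^ 2)) μ) :
    (∫ ω, Real.logb 2 (1 + (∑ i, 1 / Real.sqrt (Ψ i ω)) ^ 2) ∂μ) >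
      Real.logb 2 ((∑ i, 1 / Real.sqrt (∫ ω, Ψ i ω ∂μ)) ^ 2) := by
  have : Nonempty (Fin L) := Fin.pos_iff_nonempty.mp hL
  have hlog2 : 0 < log 2 := log_pos one_lt_two
  have hE : ∀ i, 0 < ∫ ω, Ψ i ω ∂μ := fun i => integral_pos_of_ae_pos (hint i) (hpos i)
  have hmeans : ∑ i, 1 / √(∫ ω, Ψ i ω ∂μ) ≤ ∑ i, exp (∫ ω, -log (Ψ i ω) / 2 ∂μ) := by
    refine Finset.sum_le_sum fun i _ => ?_
    rw [one_div_sqrt_eq_exp (hE i), integral_div, integral_neg, exp_le_exp]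
    linarith [integral_log_le_log_integral (hpos i) (hint i) (hlog i)]
  have hJensen : log (∑ i, exp (∫ ω, -log (Ψ i ω) / 2 ∂μ)) <
      ∫ ω, logb 2 (1 + (∑ i, 1 / √(Ψ i ω)) ^ 2) * (log 2 / 2) ∂μ := by
    refine log_sum_exp_integral_lt_integral (fun i => (hlog i).neg.div_const 2)
      (hintLHS.mul_const _) ?_
    filter_upwards [ae_all_iff.2 hpos] with ω hω
    have hS : 0 < ∑ i, 1 / √(Ψ i ω) :=
      Finset.sum_pos (fun i _ => by have := hω i; positivity) Finset.univ_nonempty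
    simp only [← one_div_sqrt_eq_exp (hω _)]
    convert log_lt_half_log_one_add_sq hS using 1
    rw [logb]
    field_simp
  have hX : 0 < ∑ i, 1 / √(∫ ω, Ψ i ω ∂μ) :=
    Finset.sum_pos (fun i _ => by have := hE i; positivity) Finset.univ_nonempty
  rw [integral_mul_const] at hJensen
  rw [gt_iff_lt, logb, div_lt_iff₀ hlog2, log_pow]
  push_cast
  linarith [log_le_log hX hmeans]
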